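/- arXiv:2310.11518 — 2 statements merged into one kernel-verified Lean document; each statement's English description precedes it below -/
import Mathlib

section
/- Let G be an n-player δ-CSP game and let Ǧ be any constant-sum polymatrix game on the same players and pure-strategy sets whose global utilities ǔ satisfy |u_i(ρ) − ǔ_i(ρ)| ≤ δ for all players i and pure profiles ρ. Then the marginal strategy profile of any coarse correlated equilibrium of G is a 2nδ-Nash equilibrium of Ǧ. -/
open Finset

section GameTheory

variable {N : Type*} [Fintype N] [DecidableEq N]
variable {P : N → Type*} [∀ j, Fintype (P j)] [∀ j, DecidableEq (P j)] [∀ j, Nonempty (P j)]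

/-- A probability distribution on a finite type. -/
def IsDist {A : Type*} [Fintype A] (μ : A → ℝ) : Prop :=
  (∀ a, 0 ≤ μ a) ∧ ∑ a, μ a = 1

/-- A profile of mixed strategies: one probability distribution per player. -/
def IsMixedProfile (s : ∀ j, P j → ℝ) : Prop := ∀ j, IsDist (s j)

/-- The mixed strategy that plays the pure strategy `a` with probability 1. -/
def pureMix {A : Type*} [DecidableEq A] (a : A) : A → ℝ := fun b => if b = a then 1 else 0

/-- Expected utility of player `i` under the mixed-strategy profile `s`:
`u_i(s) = Σ_ρ (Π_j s_j(ρ_j)) u_i(ρ)`. -/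
def mixedUtil (u : N → (∀ j, P j) → ℝ) (s : ∀ j, P j → ℝ) (i : N) : ℝ :=
  ∑ ρ : ∀ j, P j, (∏ j, s j (ρ j)) * u i ρ

/-- `s` is an ε-Nash equilibrium: no player gains more than ε by deviating to a
pure strategy. -/
def IsEpsNash (u : N → (∀ j, P j) → ℝ) (s : ∀ j, P j → ℝ) (ε : ℝ) : Prop :=
  ∀ i, ∀ ρi' : P i,
    mixedUtil u (Function.update s i (pureMix ρi')) i - mixedUtil u s i ≤ ε

/-- `μ` is an ε-coarse correlated equilibrium. -/
def IsEpsCCE (u : N → (∀ j, P j) → ℝ) (μ : (∀ j, P j) → ℝ) (ε : ℝ) : Prop :=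
  ∀ i, ∀ ρi' : P i,
    ∑ ρ : ∀ j, P j, μ ρ * (u i (Function.update ρ i ρi') - u i ρ) ≤ ε

/-- The marginal strategy of player `i` under the joint distribution `μ`. -/
def marginal (μ : (∀ j, P j) → ℝ) (i : N) (pi : P i) : ℝ :=
  ∑ ρ : ∀ j, P j, if ρ i = pi then μ ρ else 0

/-- Neighbors of `i` in the polymatrix graph, i.e. the edges `E_i` containing `i`. -/
def neighbors (Adj : N → N → Bool) (i : N) : Finset N :=
  Finset.univ.filter (fun j => Adj i j)

/-- Global utility of player `i` in the polymatrix game given by graph `Adj`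
and edgewise utilities `U`. -/
def polyUtil (Adj : N → N → Bool) (U : ∀ i j : N, P i → P j → ℝ) (i : N)
    (ρ : ∀ j, P j) : ℝ :=
  ∑ j ∈ neighbors Adj i, U i j (ρ i) (ρ j)

/-- Expected utility of `i` in the two-player subgame with `j`, under mixed
strategies `si`, `sj`. -/
def subUtil (U : ∀ i j : N, P i → P j → ℝ) (i j : N) (si : P i → ℝ) (sj : P j → ℝ) : ℝ :=
  ∑ pi : P i, ∑ pj : P j, si pi * sj pj * U i j pi pj

/-- `Adj` is a valid edge indicator: symmetric and irreflexive. -/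
def IsAdj (Adj : N → N → Bool) : Prop :=
  (∀ i j, Adj i j = Adj j i) ∧ (∀ i, Adj i i = false)

/-- `u` is the global utility function of the polymatrix game `(Adj, U)`. -/
def IsPolymatrix (u : N → (∀ j, P j) → ℝ) (Adj : N → N → Bool)
    (U : ∀ i j : N, P i → P j → ℝ) : Prop :=
  IsAdj Adj ∧ ∀ i ρ, u i ρ = polyUtil Adj U i ρ

/-- The polymatrix game `(Adj, U)` is constant-sum on every edge. -/
def IsConstantSumPoly (Adj : N → N → Bool) (U : ∀ i j : N, P i → P j → ℝ) : Prop :=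
  ∀ i j, Adj i j → ∃ c : ℝ, ∀ (pi : P i) (pj : P j), U i j pi pj + U j i pj pi = c

/-- `(si, sj)` is a γ-Nash equilibrium of the two-player subgame between `i` and `j`. -/
def SubgameEpsNash (U : ∀ i j : N, P i → P j → ℝ) (i j : N) (si : P i → ℝ)
    (sj : P j → ℝ) (γ : ℝ) : Prop :=
  (∀ pi' : P i, subUtil U i j (pureMix pi') sj - subUtil U i j si sj ≤ γ) ∧
  (∀ pj' : P j, subUtil U j i (pureMix pj') si - subUtil U j i sj si ≤ γ)

end GameTheory

/-!
Write `v i` for player `i`'s expected payoff in `Ǧ` under the CCE `μ`, and `w i` for her payoff in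
`Ǧ` when everybody plays the marginals of `μ` independently. As `|u - ǔ| ≤ δ`, `μ` is a `2δ`-CCE of
`Ǧ`. In a polymatrix game a unilateral deviation of `i` earns a sum of terms each depending on a
single opponent, so it earns the same against `μ` as against the product of the marginals of `μ`;
hence every pure deviation of `i` earns at most `v i + 2δ`, and averaging over the marginal of `i`
gives `w i ≤ v i + 2δ`. Constant sums on the edges make the total payoff `∑ i, ǔ i` constant, so
`∑ v = ∑ w` and `v i - w i = ∑_{k ≠ i} (w k - v k) ≤ 2(n-1)δ`. A deviation of `i` from the
marginal profile therefore gains at most `2δ + 2(n-1)δ = 2nδ`.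
-/

open Function

lemma prod_apply_update {ι : Type*} [Fintype ι] [DecidableEq ι] {α : ι → Type*} {M : Type*}
    [CommMonoid M] (F : ∀ k, α k → M) (g : ∀ k, α k) (i : ι) (v : α i) :
    ∏ k, F k (update g i v k) = F i v * ∏ k ∈ univ.erase i, F k (g k) := by
  simp_rw [apply_update F g i v]
  rw [prod_update_of_mem (mem_univ i), sdiff_singleton_eq_erase]

lemma sum_mul_eq_sum_mul_of_forall_eq {α : Type*} [Fintype α] {μ ν T : α → ℝ}
    (hT : ∀ x y, T x = T y) (hμ : ∑ x, μ x = 1) (hν : ∑ x, ν x = 1) :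
    ∑ x, μ x * T x = ∑ x, ν x * T x :=
  calc ∑ x, μ x * T x = (∑ x, μ x * T x) * ∑ y, ν y := by rw [hν, mul_one]
    _ = (∑ x, μ x) * ∑ y, ν y * T y := by
        rw [sum_mul_sum, sum_mul_sum]
        refine sum_congr rfl fun x _ => sum_congr rfl fun y _ => ?_
        rw [hT x y]
        ring
    _ = ∑ x, ν x * T x := by rw [hμ, one_mul]

lemma sum_sum_eq_zero_of_antisymm {ι : Type*} [Fintype ι] (E : ι → ι → ℝ)
    (hE : ∀ i j, E i j = -E j i) : ∑ i, ∑ j, E i j = 0 := by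
  have : ∑ i, ∑ j, E i j = -∑ i, ∑ j, E i j :=
    calc ∑ i, ∑ j, E i j = ∑ i, ∑ j, -E j i :=
          sum_congr rfl fun i _ => sum_congr rfl fun j _ => hE i j
      _ = -∑ j, ∑ i, E j i := by simp only [sum_neg_distrib]; rw [sum_comm]
  linarith

lemma sub_le_card_sub_one_mul_of_sum_eq {ι : Type*} [Fintype ι] [DecidableEq ι] {v w : ι → ℝ}
    {ε : ℝ} (hsum : ∑ k, v k = ∑ k, w k) (hle : ∀ k, w k - v k ≤ ε) (i : ι) :
    v i - w i ≤ (Fintype.card ι - 1) * ε := by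
  have htotal : ∑ k, (w k - v k) = 0 := by rw [sum_sub_distrib, hsum, sub_self]
  have hsplit := sum_erase_add univ (fun k => w k - v k) (mem_univ i)
  rw [htotal] at hsplit
  calc v i - w i = ∑ k ∈ univ.erase i, (w k - v k) := by linarith
    _ ≤ ∑ k ∈ univ.erase i, ε := sum_le_sum fun k _ => hle k
    _ = (Fintype.card ι - 1) * ε := by
        rw [sum_const, nsmul_eq_mul, cast_card_erase_of_mem (mem_univ i), card_univ]

lemma sum_pureMix {A : Type*} [Fintype A] [DecidableEq A] (a : A) : ∑ b, pureMix a b = 1 := by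
  simp [pureMix]

lemma sum_pureMix_apply {A : Type*} [Fintype A] [DecidableEq A] (b : A) :
    ∑ a, pureMix a b = 1 := by
  simp [pureMix]

lemma sum_update_pureMix {N : Type*} [DecidableEq N] {P : N → Type*} [∀ j, Fintype (P j)]
    [∀ j, DecidableEq (P j)] {s : ∀ j, P j → ℝ} {i : N} (hs : ∀ k ≠ i, ∑ x, s k x = 1) (a : P i)
    (k : N) : ∑ x, update s i (pureMix a) k x = 1 := by
  rcases eq_or_ne k i with rfl | hki
  · rw [update_self, sum_pureMix]
  · rw [update_of_ne hki, hs k hki]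

lemma prod_update_pureMix {N : Type*} [Fintype N] [DecidableEq N] {P : N → Type*}
    [∀ j, DecidableEq (P j)] (s : ∀ j, P j → ℝ) (i : N) (a : P i) (ρ : ∀ j, P j) :
    ∏ k, update s i (pureMix a) k (ρ k) = pureMix a (ρ i) * ∏ k ∈ univ.erase i, s k (ρ k) :=
  prod_apply_update (fun k t => t (ρ k)) s i (pureMix a)

lemma pureMix_mul_prod {N : Type*} [Fintype N] [DecidableEq N] {P : N → Type*}
    [∀ j, DecidableEq (P j)] (s : ∀ j, P j → ℝ) (i : N) (a : P i) (ρ : ∀ j, P j) :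
    pureMix a (ρ i) * ∏ k, s k (ρ k) = s i a * ∏ k, update s i (pureMix a) k (ρ k) := by
  rw [prod_update_pureMix, ← mul_prod_erase univ _ (mem_univ i)]
  unfold pureMix
  split_ifs with h
  · rw [h]; ring
  · simp

section Profiles

variable {N : Type*} [Fintype N] [DecidableEq N] {P : N → Type*} [∀ j, Fintype (P j)]

theorem IsEpsCCE.of_abs_sub_le {u u' : N → (∀ j, P j) → ℝ} {μ : (∀ j, P j) → ℝ} {ε δ : ℝ}
    (hμ : IsDist μ) (h : IsEpsCCE u μ ε) (hδ : ∀ i ρ, |u i ρ - u' i ρ| ≤ δ) :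
    IsEpsCCE u' μ (ε + 2 * δ) := by
  intro i a
  calc ∑ ρ, μ ρ * (u' i (update ρ i a) - u' i ρ)
      ≤ ∑ ρ, μ ρ * ((u i (update ρ i a) - u i ρ) + 2 * δ) := by
        refine sum_le_sum fun ρ _ => mul_le_mul_of_nonneg_left ?_ (hμ.1 ρ)
        linarith [abs_le.mp (hδ i (update ρ i a)), abs_le.mp (hδ i ρ)]
    _ = ∑ ρ, μ ρ * (u i (update ρ i a) - u i ρ) + 2 * δ := by
        simp_rw [mul_add, sum_add_distrib, ← sum_mul, hμ.2, one_mul]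
    _ ≤ ε + 2 * δ := by linarith [h i a]

lemma sum_prod_eq_one {s : ∀ j, P j → ℝ} (hs : ∀ k, ∑ x, s k x = 1) :
    ∑ ρ : ∀ j, P j, ∏ k, s k (ρ k) = 1 := by
  rw [← Fintype.prod_sum]
  simp [hs]

lemma sum_sum_mul_eq_sum_mixedUtil {u : N → (∀ j, P j) → ℝ} (hu : ∀ ρ ρ', ∑ i, u i ρ = ∑ i, u i ρ')
    {μ : (∀ j, P j) → ℝ} (hμ : ∑ ρ, μ ρ = 1) {s : ∀ j, P j → ℝ} (hs : ∀ k, ∑ x, s k x = 1) :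
    ∑ i, ∑ ρ, μ ρ * u i ρ = ∑ i, mixedUtil u s i := by
  unfold mixedUtil
  rw [sum_comm, sum_comm (f := fun i ρ => (∏ k, s k (ρ k)) * u i ρ)]
  simp_rw [← mul_sum]
  exact sum_mul_eq_sum_mul_of_forall_eq hu hμ (sum_prod_eq_one hs)

variable [∀ j, DecidableEq (P j)]

lemma sum_marginal_mul (μ : (∀ j, P j) → ℝ) (j : N) (c : P j → ℝ) :
    ∑ x, marginal μ j x * c x = ∑ ρ, μ ρ * c (ρ j) := by
  unfold marginal
  simp_rw [sum_mul, ite_mul, zero_mul]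
  rw [sum_comm]
  simp

lemma sum_marginal (μ : (∀ j, P j) → ℝ) (j : N) : ∑ x, marginal μ j x = ∑ ρ, μ ρ := by
  simpa using sum_marginal_mul μ j 1

lemma isDist_marginal {μ : (∀ j, P j) → ℝ} (hμ : IsDist μ) (j : N) : IsDist (marginal μ j) :=
  ⟨fun _ => sum_nonneg fun ρ _ => by split_ifs <;> simp [hμ.1 ρ], (sum_marginal μ j).trans hμ.2⟩

lemma marginal_prod {s : ∀ j, P j → ℝ} {j : N} (hs : ∀ k ≠ j, ∑ x, s k x = 1) :
    marginal (fun ρ => ∏ k, s k (ρ k)) j = s j := by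
  funext x
  calc marginal (fun ρ => ∏ k, s k (ρ k)) j x
        = ∑ ρ : ∀ j, P j, pureMix x (ρ j) * ∏ k, s k (ρ k) := by
        simp only [marginal, pureMix, ite_mul, one_mul, zero_mul]
    _ = s j x := by
        simp_rw [pureMix_mul_prod]
        rw [← mul_sum, sum_prod_eq_one (sum_update_pureMix hs x), mul_one]

lemma mixedUtil_eq_sum_mul_mixedUtil_update (u : N → (∀ j, P j) → ℝ) (s : ∀ j, P j → ℝ) (i : N) :
    mixedUtil u s i = ∑ a, s i a * mixedUtil u (update s i (pureMix a)) i := by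
  unfold mixedUtil
  simp_rw [mul_sum, ← mul_assoc, ← pureMix_mul_prod]
  rw [sum_comm]
  simp_rw [← sum_mul, sum_pureMix_apply, one_mul]

lemma mixedUtil_update_pureMix (u : N → (∀ j, P j) → ℝ) (s : ∀ j, P j → ℝ) (i : N) (a : P i) :
    mixedUtil u (update s i (pureMix a)) i
      = ∑ ρ, (∏ k, update s i (pureMix a) k (ρ k)) * u i (update ρ i a) := by
  refine sum_congr rfl fun ρ _ => ?_
  rw [prod_update_pureMix]
  unfold pureMix
  split_ifs with h
  · rw [← h, update_eq_self]
  · simp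

theorem IsEpsCCE.isEpsNash_marginal {u : N → (∀ j, P j) → ℝ} {μ : (∀ j, P j) → ℝ} {ε : ℝ}
    (hμ : IsDist μ) (hcce : IsEpsCCE u μ ε)
    (hdev : ∀ i (a : P i),
      ∑ ρ, μ ρ * u i (update ρ i a) = mixedUtil u (update (marginal μ) i (pureMix a)) i)
    (hwelfare : ∑ i, ∑ ρ, μ ρ * u i ρ = ∑ i, mixedUtil u (marginal μ) i) :
    IsEpsNash u (marginal μ) (Fintype.card N * ε) := by
  have hgain : ∀ i (a : P i),
      mixedUtil u (update (marginal μ) i (pureMix a)) i - ∑ ρ, μ ρ * u i ρ ≤ ε := by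
    intro i a
    rw [← hdev]
    simpa [mul_sub, sum_sub_distrib] using hcce i a
  have hloss : ∀ i, mixedUtil u (marginal μ) i - ∑ ρ, μ ρ * u i ρ ≤ ε := by
    intro i
    have hs := isDist_marginal hμ i
    have : mixedUtil u (marginal μ) i ≤ ∑ a, marginal μ i a * (∑ ρ, μ ρ * u i ρ + ε) := by
      rw [mixedUtil_eq_sum_mul_mixedUtil_update]
      exact sum_le_sum fun a _ => mul_le_mul_of_nonneg_left (by linarith [hgain i a]) (hs.1 a)
    rw [← sum_mul, hs.2, one_mul] at this
    linarith
  intro i a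
  linarith [hgain i a, sub_le_card_sub_one_mul_of_sum_eq hwelfare hloss i]

end Profiles

section Polymatrix

variable {N : Type*} [Fintype N] {P : N → Type*}

lemma ne_of_mem_neighbors {Adj : N → N → Bool} (hirr : ∀ i, Adj i i = false) {i j : N}
    (hj : j ∈ neighbors Adj i) : j ≠ i := by
  rintro rfl
  simp [neighbors, hirr] at hj

lemma polyUtil_update_self [DecidableEq N] {Adj : N → N → Bool} (hirr : ∀ i, Adj i i = false)
    (U : ∀ i j : N, P i → P j → ℝ) (ρ : ∀ j, P j) (i : N) (a : P i) :
    polyUtil Adj U i (update ρ i a) = ∑ j ∈ neighbors Adj i, U i j a (ρ j) :=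
  sum_congr rfl fun j hj => by rw [update_self, update_of_ne (ne_of_mem_neighbors hirr hj)]

lemma sum_mul_polyUtil_update_eq_mixedUtil [DecidableEq N] [∀ j, Fintype (P j)]
    [∀ j, DecidableEq (P j)]
    {Adj : N → N → Bool} (hirr : ∀ i, Adj i i = false) (U : ∀ i j : N, P i → P j → ℝ)
    {μ : (∀ j, P j) → ℝ} (hμ : ∑ ρ, μ ρ = 1) (i : N) (a : P i) :
    ∑ ρ, μ ρ * polyUtil Adj U i (update ρ i a)
      = mixedUtil (polyUtil Adj U) (update (marginal μ) i (pureMix a)) i := by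
  have hs : ∀ k, ∑ x, update (marginal μ) i (pureMix a) k x = 1 :=
    sum_update_pureMix (fun k _ => (sum_marginal μ k).trans hμ) a
  rw [mixedUtil_update_pureMix]
  simp_rw [polyUtil_update_self hirr, mul_sum]
  conv_lhs => rw [sum_comm]
  conv_rhs => rw [sum_comm]
  refine sum_congr rfl fun j hj => ?_
  rw [← sum_marginal_mul, ← sum_marginal_mul, marginal_prod fun k _ => hs k,
    update_of_ne (ne_of_mem_neighbors hirr hj)]

lemma sum_polyUtil_eq {Adj : N → N → Bool} {U : ∀ i j : N, P i → P j → ℝ}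
    (hsymm : ∀ i j, Adj i j = Adj j i) (hcs : IsConstantSumPoly Adj U) (ρ ρ' : ∀ j, P j) :
    ∑ i, polyUtil Adj U i ρ = ∑ i, polyUtil Adj U i ρ' := by
  set E : N → N → ℝ := fun i j =>
    if Adj i j then U i j (ρ i) (ρ j) - U i j (ρ' i) (ρ' j) else 0
  have hanti : ∀ i j, E i j = -E j i := by
    intro i j
    by_cases h : Adj i j
    · obtain ⟨c, hc⟩ := hcs i j h
      have h' : Adj j i := hsymm i j ▸ h
      simp only [E, h, h', if_true]
      linarith [hc (ρ i) (ρ j), hc (ρ' i) (ρ' j)]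
    · have h' : ¬Adj j i := hsymm i j ▸ h
      simp [E, h, h']
  rw [← sub_eq_zero, ← sum_sub_distrib, ← sum_sum_eq_zero_of_antisymm E hanti]
  refine sum_congr rfl fun i _ => ?_
  simp only [polyUtil, neighbors, sum_filter, ← sum_sub_distrib]
  exact sum_congr rfl fun j _ => by simp only [E]; split_ifs <;> simp

end Polymatrix

theorem cce_marginal_is_two_n_delta_nash_of_check_game_general
    {N : Type*} [Fintype N] [DecidableEq N]
    {P : N → Type*} [∀ j, Fintype (P j)] [∀ j, DecidableEq (P j)]
    (u : N → (∀ j, P j) → ℝ) (δ : ℝ)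
    (Adj : N → N → Bool) (U : ∀ i j : N, P i → P j → ℝ)
    (hAdj : IsAdj Adj) (hcs : IsConstantSumPoly Adj U)
    (hδ : ∀ i ρ, |u i ρ - polyUtil Adj U i ρ| ≤ δ)
    (μ : (∀ j, P j) → ℝ) (hμd : IsDist μ) (hμ : IsEpsCCE u μ 0) :
    IsEpsNash (fun i ρ => polyUtil Adj U i ρ) (fun j => marginal μ j)
      (2 * (Fintype.card N : ℝ) * δ) := by
  have hcce : IsEpsCCE (polyUtil Adj U) μ (0 + 2 * δ) := hμ.of_abs_sub_le hμd hδ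
  have hwelfare := sum_sum_mul_eq_sum_mixedUtil (sum_polyUtil_eq hAdj.1 hcs) hμd.2
    fun k => (isDist_marginal hμd k).2
  have hnash := hcce.isEpsNash_marginal hμd
    (sum_mul_polyUtil_update_eq_mixedUtil hAdj.2 U hμd.2) hwelfare
  convert hnash using 1
  ring

/-- If `G` is an n-player δ-CSP game via the constant-sum polymatrix game `Ǧ`,
then the marginal strategy profile of any CCE of `G` is a 2nδ-Nash equilibrium of `Ǧ`. -/
theorem cce_marginal_is_two_n_delta_nash_of_check_game
    {N : Type*} [Fintype N] [DecidableEq N]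
    {P : N → Type*} [∀ j, Fintype (P j)] [∀ j, DecidableEq (P j)] [∀ j, Nonempty (P j)]
    (u : N → (∀ j, P j) → ℝ) (δ : ℝ)
    (Adj : N → N → Bool) (U : ∀ i j : N, P i → P j → ℝ)
    (hAdj : IsAdj Adj) (hcs : IsConstantSumPoly Adj U)
    (hδ : ∀ i ρ, |u i ρ - polyUtil Adj U i ρ| ≤ δ)
    (μ : (∀ j, P j) → ℝ) (hμd : IsDist μ) (hμ : IsEpsCCE u μ 0) :
    IsEpsNash (fun i ρ => polyUtil Adj U i ρ) (fun j => marginal μ j)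
      (2 * (Fintype.card N : ℝ) * δ) :=
  cce_marginal_is_two_n_delta_nash_of_check_game_general u δ Adj U hAdj hcs hδ μ hμd hμ
end

section
/- Let G be an n-player δ-CSP game. Then the marginal strategy profile of any coarse correlated equilibrium of G is a 2(n+1)δ-Nash equilibrium of G itself. -/
open Finset

section Helpers2
variable {N : Type*} [Fintype N] [DecidableEq N]
variable {P : N → Type*} [∀ j, Fintype (P j)] [∀ j, DecidableEq (P j)]

lemma sum_prod_pi (f : ∀ k, P k → ℝ) :
    ∑ ρ : ∀ k, P k, ∏ k, f k (ρ k) = ∏ k, ∑ p, f k p := by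
  rw [Finset.prod_univ_sum, Fintype.piFinset_univ]

lemma dist_weighted_le {A : Type*} [Fintype A] {ν a b : A → ℝ} {δ : ℝ}
    (h0 : ∀ x, 0 ≤ ν x) (h1 : ∑ x, ν x = 1) (hab : ∀ x, a x - b x ≤ δ) :
    ∑ x, ν x * a x ≤ (∑ x, ν x * b x) + δ := by
  have h : ∑ x, ν x * a x ≤ ∑ x, (ν x * b x + ν x * δ) := by
    refine Finset.sum_le_sum fun x _ => ?_
    nlinarith [h0 x, hab x]
  calc ∑ x, ν x * a x ≤ _ := h
    _ = (∑ x, ν x * b x) + (∑ x, ν x) * δ := by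
        rw [Finset.sum_add_distrib, Finset.sum_mul]
    _ = (∑ x, ν x * b x) + δ := by rw [h1, one_mul]

lemma hsplit_prod {i j : N} (hij : i ≠ j) (F : N → ℝ) (hF : ∀ k, k ≠ i → k ≠ j → F k = 1) :
    ∏ k, F k = F i * F j := by
  have h1 : ∏ k ∈ ({i, j} : Finset N), F k = ∏ k, F k := by
    refine Finset.prod_subset (Finset.subset_univ _) ?_
    intro k _ hk
    simp only [Finset.mem_insert, Finset.mem_singleton, not_or] at hk
    exact hF k hk.1 hk.2
  rw [← h1, Finset.prod_pair hij]

lemma prod_marg₂ (s : ∀ j, P j → ℝ) (hs : ∀ j, ∑ p, s j p = 1)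
    {i j : N} (hij : i ≠ j) (f : P i → P j → ℝ) :
    ∑ ρ : ∀ k, P k, (∏ k, s k (ρ k)) * f (ρ i) (ρ j)
      = ∑ pi : P i, ∑ pj : P j, s i pi * s j pj * f pi pj := by
  classical
  have key : ∀ (pi : P i) (pj : P j),
      (∑ ρ : ∀ k, P k, (∏ k, s k (ρ k)) *
        ((if ρ i = pi then (1:ℝ) else 0) * (if ρ j = pj then (1:ℝ) else 0)))
        = s i pi * s j pj := by
    intro pi pj
    set w : ∀ k, P k → ℝ :=
      Function.update (Function.update (fun k (_ : P k) => (1:ℝ)) i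
        (fun p => if p = pi then 1 else 0)) j (fun p => if p = pj then 1 else 0) with hw
    have hwi : w i = fun p => if p = pi then (1:ℝ) else 0 := by
      rw [hw, Function.update_of_ne hij, Function.update_self]
    have hwj : w j = fun p => if p = pj then (1:ℝ) else 0 := by
      rw [hw, Function.update_self]
    have hwo : ∀ k, k ≠ i → k ≠ j → w k = fun _ => (1:ℝ) := fun k hki hkj => by
      rw [hw, Function.update_of_ne hkj, Function.update_of_ne hki]
    have h2 : ∀ ρ : ∀ k, P k, (∏ k, w k (ρ k))
        = (if ρ i = pi then (1:ℝ) else 0) * (if ρ j = pj then (1:ℝ) else 0) := by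
      intro ρ
      rw [hsplit_prod hij (fun k => w k (ρ k)) (fun k hki hkj => by show w k (ρ k) = 1; rw [hwo k hki hkj])]
      simp only [hwi, hwj]
    have h3 : ∑ ρ : ∀ k, P k, (∏ k, s k (ρ k)) * (∏ k, w k (ρ k))
        = ∏ k, ∑ p, s k p * w k p := by
      rw [← sum_prod_pi (fun k p => s k p * w k p)]
      refine Finset.sum_congr rfl fun ρ _ => ?_
      rw [Finset.prod_mul_distrib]
    have h4 : ∏ k, ∑ p, s k p * w k p = s i pi * s j pj := by
      rw [hsplit_prod hij (fun k => ∑ p, s k p * w k p)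
        (fun k hki hkj => by show (∑ p, s k p * w k p) = 1; rw [hwo k hki hkj]; simpa using hs k)]
      simp only [hwi, hwj, mul_ite, mul_one, mul_zero]
      rw [Finset.sum_ite_eq' Finset.univ pi (s i), Finset.sum_ite_eq' Finset.univ pj (s j)]
      simp
    calc ∑ ρ : ∀ k, P k, (∏ k, s k (ρ k)) *
          ((if ρ i = pi then (1:ℝ) else 0) * (if ρ j = pj then (1:ℝ) else 0))
        = ∑ ρ : ∀ k, P k, (∏ k, s k (ρ k)) * (∏ k, w k (ρ k)) := by
          refine Finset.sum_congr rfl fun ρ _ => ?_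
          rw [h2 ρ]
      _ = s i pi * s j pj := by rw [h3, h4]
  calc ∑ ρ : ∀ k, P k, (∏ k, s k (ρ k)) * f (ρ i) (ρ j)
      = ∑ ρ : ∀ k, P k, ∑ pi : P i, ∑ pj : P j, (∏ k, s k (ρ k)) *
          ((if ρ i = pi then (1:ℝ) else 0) * (if ρ j = pj then (1:ℝ) else 0)) * f pi pj := by
        refine Finset.sum_congr rfl fun ρ _ => ?_
        simp only [mul_ite, ite_mul, mul_one, one_mul, mul_zero, zero_mul,
          Finset.sum_ite_irrel, Finset.sum_const_zero, Finset.sum_ite_eq, Finset.mem_univ,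
          if_true]
    _ = ∑ pi : P i, ∑ pj : P j, (∑ ρ : ∀ k, P k, (∏ k, s k (ρ k)) *
          ((if ρ i = pi then (1:ℝ) else 0) * (if ρ j = pj then (1:ℝ) else 0))) * f pi pj := by
        rw [Finset.sum_comm]
        refine Finset.sum_congr rfl fun pi _ => ?_
        rw [Finset.sum_comm]
        refine Finset.sum_congr rfl fun pj _ => ?_
        rw [Finset.sum_mul]
    _ = ∑ pi : P i, ∑ pj : P j, s i pi * s j pj * f pi pj := by
        refine Finset.sum_congr rfl fun pi _ => Finset.sum_congr rfl fun pj _ => ?_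
        rw [key pi pj]

end Helpers2

section Helpers3
variable {N : Type*} [Fintype N] [DecidableEq N]
variable {P : N → Type*} [∀ j, Fintype (P j)] [∀ j, DecidableEq (P j)]

set_option linter.unusedSectionVars false

lemma marg_sum (μ : (∀ j, P j) → ℝ) (j : N) (g : P j → ℝ) :
    ∑ pj : P j, marginal μ j pj * g pj = ∑ ρ : ∀ k, P k, μ ρ * g (ρ j) := by
  unfold marginal
  simp only [Finset.sum_mul, ite_mul, zero_mul]
  rw [Finset.sum_comm]
  refine Finset.sum_congr rfl fun ρ _ => ?_
  simp [Finset.sum_ite_eq]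

lemma subUtil_pure (U : ∀ i j : N, P i → P j → ℝ) (i j : N) (pi' : P i) (sj : P j → ℝ) :
    subUtil U i j (pureMix pi') sj = ∑ pj : P j, sj pj * U i j pi' pj := by
  unfold subUtil pureMix
  simp only [ite_mul, one_mul, zero_mul, Finset.sum_ite_irrel, Finset.sum_const_zero,
    Finset.sum_ite_eq', Finset.mem_univ, if_true]

lemma mixed_poly (Adj : N → N → Bool) (hAdj : IsAdj Adj) (U : ∀ i j : N, P i → P j → ℝ)
    (σ : ∀ j, P j → ℝ) (hσ : ∀ j, ∑ p, σ j p = 1) (i : N) :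
    mixedUtil (polyUtil Adj U) σ i = ∑ j ∈ neighbors Adj i, subUtil U i j (σ i) (σ j) := by
  unfold mixedUtil polyUtil
  simp only [Finset.mul_sum]
  rw [Finset.sum_comm]
  refine Finset.sum_congr rfl fun j hj => ?_
  have hij : i ≠ j := by
    intro h
    subst h
    simp only [neighbors, Finset.mem_filter, Finset.mem_univ, true_and] at hj
    rw [hAdj.2 i] at hj
    exact absurd hj (by simp)
  rw [prod_marg₂ σ hσ hij (U i j)]
  rfl

lemma nbr_swap (Adj : N → N → Bool) (hAdj : IsAdj Adj) (F : N → N → ℝ) :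
    ∑ i, ∑ j ∈ neighbors Adj i, F i j = ∑ i, ∑ j ∈ neighbors Adj i, F j i := by
  have h : ∀ G : N → N → ℝ, ∑ i, ∑ j ∈ neighbors Adj i, G i j
      = ∑ i, ∑ j, if Adj i j then G i j else 0 := by
    intro G
    refine Finset.sum_congr rfl fun i _ => ?_
    rw [neighbors, Finset.sum_filter]
  rw [h F, h (fun i j => F j i), Finset.sum_comm]
  refine Finset.sum_congr rfl fun x _ => Finset.sum_congr rfl fun y _ => ?_
  rw [hAdj.1 y x]

end Helpers3

/-- If `G` is an n-player δ-CSP game, then the marginal strategy profile of any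
CCE of `G` is a 2(n+1)δ-Nash equilibrium of `G` itself. -/
theorem cce_marginal_is_approx_nash_of_delta_csp
    {N : Type*} [Fintype N] [DecidableEq N]
    {P : N → Type*} [∀ j, Fintype (P j)] [∀ j, DecidableEq (P j)] [∀ j, Nonempty (P j)]
    (u : N → (∀ j, P j) → ℝ) (δ : ℝ)
    (hδcsp : ∃ (Adj : N → N → Bool) (U : ∀ i j : N, P i → P j → ℝ),
        IsAdj Adj ∧ IsConstantSumPoly Adj U ∧
        ∀ i ρ, |u i ρ - polyUtil Adj U i ρ| ≤ δ)
    (μ : (∀ j, P j) → ℝ) (hμd : IsDist μ) (hμ : IsEpsCCE u μ 0) :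
    IsEpsNash u (fun j => marginal μ j) (2 * ((Fintype.card N : ℝ) + 1) * δ) := by
  classical
  obtain ⟨Adj, U, hAdj, hCS, hclose⟩ := hδcsp
  intro i ρi'
  have hδ0 : 0 ≤ δ := le_trans (abs_nonneg _) (hclose i (Classical.arbitrary _))
  obtain ⟨hμ0, hμ1⟩ := hμd
  set s : ∀ j, P j → ℝ := fun j => marginal μ j with hsdef
  have hms : ∀ (j : N) (g : P j → ℝ), ∑ pj, s j pj * g pj = ∑ ρ, μ ρ * g (ρ j) := by
    intro j g
    exact marg_sum μ j g
  have hs1 : ∀ j, ∑ p, s j p = 1 := by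
    intro j
    have h := hms j (fun _ => (1 : ℝ))
    simpa [hμ1] using h
  have hs0 : ∀ (j : N) (p : P j), 0 ≤ s j p := by
    intro j p
    refine Finset.sum_nonneg fun ρ _ => ?_
    split
    · exact hμ0 ρ
    · exact le_refl 0
  have hneib : ∀ k j, j ∈ neighbors Adj k → k ≠ j := by
    intro k j hj h
    subst h
    simp only [neighbors, Finset.mem_filter, Finset.mem_univ, true_and] at hj
    rw [hAdj.2 k] at hj
    exact absurd hj (by simp)
  -- deviation value bounded by CCE value
  have hc : ∀ (k : N) (pk' : P k), (∑ j ∈ neighbors Adj k, subUtil U k j (pureMix pk') (s j))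
      ≤ (∑ ρ, μ ρ * polyUtil Adj U k ρ) + 2 * δ := by
    intro k pk'
    have hA : (∑ j ∈ neighbors Adj k, subUtil U k j (pureMix pk') (s j))
        = ∑ ρ, μ ρ * polyUtil Adj U k (Function.update ρ k pk') := by
      have hupd : ∀ ρ : ∀ j, P j, polyUtil Adj U k (Function.update ρ k pk')
          = ∑ j ∈ neighbors Adj k, U k j pk' (ρ j) := by
        intro ρ
        unfold polyUtil
        refine Finset.sum_congr rfl fun j hj => ?_
        rw [Function.update_self, Function.update_of_ne (Ne.symm (hneib k j hj))]
      calc ∑ j ∈ neighbors Adj k, subUtil U k j (pureMix pk') (s j)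
          = ∑ j ∈ neighbors Adj k, ∑ ρ, μ ρ * U k j pk' (ρ j) := by
            refine Finset.sum_congr rfl fun j hj => ?_
            rw [subUtil_pure]
            exact hms j (fun pj => U k j pk' pj)
        _ = ∑ ρ, ∑ j ∈ neighbors Adj k, μ ρ * U k j pk' (ρ j) := Finset.sum_comm
        _ = ∑ ρ, μ ρ * polyUtil Adj U k (Function.update ρ k pk') := by
            refine Finset.sum_congr rfl fun ρ _ => ?_
            rw [hupd ρ, Finset.mul_sum]
    have hB : (∑ ρ, μ ρ * polyUtil Adj U k (Function.update ρ k pk'))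
        ≤ (∑ ρ, μ ρ * u k (Function.update ρ k pk')) + δ := by
      refine dist_weighted_le hμ0 hμ1 fun ρ => ?_
      have h := abs_le.mp (hclose k (Function.update ρ k pk'))
      linarith [h.1]
    have hC : (∑ ρ, μ ρ * u k (Function.update ρ k pk')) ≤ ∑ ρ, μ ρ * u k ρ := by
      have h := hμ k pk'
      have heq : ∑ ρ, μ ρ * (u k (Function.update ρ k pk') - u k ρ)
          = (∑ ρ, μ ρ * u k (Function.update ρ k pk')) - ∑ ρ, μ ρ * u k ρ := by
        rw [← Finset.sum_sub_distrib]
        exact Finset.sum_congr rfl fun ρ _ => by ring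
      rw [heq] at h
      linarith
    have hD : (∑ ρ, μ ρ * u k ρ) ≤ (∑ ρ, μ ρ * polyUtil Adj U k ρ) + δ := by
      refine dist_weighted_le hμ0 hμ1 fun ρ => ?_
      exact (abs_le.mp (hclose k ρ)).2
    rw [hA]
    linarith
  -- marginal-profile value as average of deviation values
  have hvk : ∀ k, mixedUtil (polyUtil Adj U) s k
      = ∑ pk : P k, s k pk * ∑ j ∈ neighbors Adj k, subUtil U k j (pureMix pk) (s j) := by
    intro k
    rw [mixed_poly Adj hAdj U s hs1 k]
    have hsub : ∀ j, subUtil U k j (s k) (s j)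
        = ∑ pk : P k, s k pk * subUtil U k j (pureMix pk) (s j) := by
      intro j
      have hp : ∀ pk : P k, subUtil U k j (pureMix pk) (s j) = ∑ pj, s j pj * U k j pk pj :=
        fun pk => subUtil_pure U k j pk (s j)
      simp only [hp]
      unfold subUtil
      refine Finset.sum_congr rfl fun pk _ => ?_
      rw [Finset.mul_sum]
      exact Finset.sum_congr rfl fun pj _ => by ring
    calc ∑ j ∈ neighbors Adj k, subUtil U k j (s k) (s j)
        = ∑ j ∈ neighbors Adj k, ∑ pk : P k, s k pk * subUtil U k j (pureMix pk) (s j) :=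
          Finset.sum_congr rfl fun j _ => hsub j
      _ = ∑ pk : P k, ∑ j ∈ neighbors Adj k, s k pk * subUtil U k j (pureMix pk) (s j) :=
          Finset.sum_comm
      _ = ∑ pk : P k, s k pk * ∑ j ∈ neighbors Adj k, subUtil U k j (pureMix pk) (s j) :=
          Finset.sum_congr rfl fun pk _ => (Finset.mul_sum _ _ _).symm
  have hvw : ∀ k, mixedUtil (polyUtil Adj U) s k ≤ (∑ ρ, μ ρ * polyUtil Adj U k ρ) + 2 * δ := by
    intro k
    rw [hvk k]
    calc ∑ pk : P k, s k pk * ∑ j ∈ neighbors Adj k, subUtil U k j (pureMix pk) (s j)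
        ≤ ∑ pk : P k, s k pk * ((∑ ρ, μ ρ * polyUtil Adj U k ρ) + 2 * δ) :=
          Finset.sum_le_sum fun pk _ => mul_le_mul_of_nonneg_left (hc k pk) (hs0 k pk)
      _ = _ := by rw [← Finset.sum_mul, hs1 k, one_mul]
  -- constant sum
  have hconst : ∀ ρ ρ' : ∀ j, P j, (∑ k, polyUtil Adj U k ρ) = ∑ k, polyUtil Adj U k ρ' := by
    have key : ∀ ρ : ∀ j, P j, 2 * ∑ k, polyUtil Adj U k ρ
        = ∑ k, ∑ j ∈ neighbors Adj k, (if h : Adj k j then (hCS k j h).choose else 0) := by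
      intro ρ
      calc 2 * ∑ k, polyUtil Adj U k ρ
          = (∑ k, ∑ j ∈ neighbors Adj k, U k j (ρ k) (ρ j))
            + ∑ k, ∑ j ∈ neighbors Adj k, U j k (ρ j) (ρ k) := by
            rw [← nbr_swap Adj hAdj (fun k j => U k j (ρ k) (ρ j))]
            unfold polyUtil
            ring
        _ = ∑ k, ∑ j ∈ neighbors Adj k, (U k j (ρ k) (ρ j) + U j k (ρ j) (ρ k)) := by
            rw [← Finset.sum_add_distrib]
            exact Finset.sum_congr rfl fun k _ => (Finset.sum_add_distrib).symm
        _ = ∑ k, ∑ j ∈ neighbors Adj k, (if h : Adj k j then (hCS k j h).choose else 0) := by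
            refine Finset.sum_congr rfl fun k _ => Finset.sum_congr rfl fun j hj => ?_
            have hkj : Adj k j := by
              simpa [neighbors] using hj
            rw [dif_pos hkj]
            exact (hCS k j hkj).choose_spec (ρ k) (ρ j)
    intro ρ ρ'
    have h1 := key ρ
    have h2 := key ρ'
    linarith
  -- total expected values agree
  have hsum_eq : (∑ k, mixedUtil (polyUtil Adj U) s k) = ∑ k, ∑ ρ, μ ρ * polyUtil Adj U k ρ := by
    obtain ⟨ρ0⟩ := (inferInstance : Nonempty (∀ j, P j))
    have hgen : ∀ ν : (∀ j, P j) → ℝ, (∑ ρ, ν ρ = 1) →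
        (∑ k, ∑ ρ, ν ρ * polyUtil Adj U k ρ) = ∑ k, polyUtil Adj U k ρ0 := by
      intro ν hν
      rw [Finset.sum_comm]
      calc ∑ ρ, ∑ k, ν ρ * polyUtil Adj U k ρ
          = ∑ ρ, ν ρ * ∑ k, polyUtil Adj U k ρ0 := by
            refine Finset.sum_congr rfl fun ρ _ => ?_
            rw [← Finset.mul_sum, hconst ρ ρ0]
        _ = _ := by rw [← Finset.sum_mul, hν, one_mul]
    have hprod1 : ∑ ρ : ∀ j, P j, ∏ k, s k (ρ k) = 1 := by
      rw [sum_prod_pi]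
      calc ∏ k, ∑ p, s k p = ∏ k : N, (1:ℝ) := Finset.prod_congr rfl fun k _ => hs1 k
        _ = 1 := Finset.prod_const_one
    have h1 := hgen (fun ρ => ∏ k, s k (ρ k)) hprod1
    have h2 := hgen μ hμ1
    calc ∑ k, mixedUtil (polyUtil Adj U) s k
        = ∑ k, ∑ ρ, (fun ρ : ∀ j, P j => ∏ k, s k (ρ k)) ρ * polyUtil Adj U k ρ := rfl
      _ = ∑ k, polyUtil Adj U k ρ0 := h1
      _ = ∑ k, ∑ ρ, μ ρ * polyUtil Adj U k ρ := h2.symm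
  -- per player gap bound
  have hn1 : (1 : ℝ) ≤ Fintype.card N := by
    have : 0 < Fintype.card N := Fintype.card_pos_iff.mpr ⟨i⟩
    exact_mod_cast this
  have hbound : (∑ ρ, μ ρ * polyUtil Adj U i ρ)
      ≤ mixedUtil (polyUtil Adj U) s i + ((Fintype.card N : ℝ) - 1) * (2 * δ) := by
    have h1 : ∑ k ∈ Finset.univ.erase i,
          (mixedUtil (polyUtil Adj U) s k - ∑ ρ, μ ρ * polyUtil Adj U k ρ)
        = (∑ ρ, μ ρ * polyUtil Adj U i ρ) - mixedUtil (polyUtil Adj U) s i := by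
      rw [Finset.sum_sub_distrib, Finset.sum_erase_eq_sub (Finset.mem_univ i),
        Finset.sum_erase_eq_sub (Finset.mem_univ i)]
      linarith [hsum_eq]
    have h2 : ∑ k ∈ Finset.univ.erase i,
          (mixedUtil (polyUtil Adj U) s k - ∑ ρ, μ ρ * polyUtil Adj U k ρ)
        ≤ ∑ _k ∈ Finset.univ.erase i, (2 * δ) :=
      Finset.sum_le_sum fun k _ => by linarith [hvw k]
    have h3 : ∑ _k ∈ Finset.univ.erase i, (2 * δ) = ((Fintype.card N : ℝ) - 1) * (2 * δ) := by
      rw [Finset.sum_const, Finset.card_erase_of_mem (Finset.mem_univ i), Finset.card_univ,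
        nsmul_eq_mul]
      have hcast : ((Fintype.card N - 1 : ℕ) : ℝ) = (Fintype.card N : ℝ) - 1 := by
        have h : 1 ≤ Fintype.card N := Fintype.card_pos_iff.mpr ⟨i⟩
        push_cast [h]
        ring
      rw [hcast]
    rw [h3] at h2
    linarith
  -- the deviated profile
  set s' : ∀ j, P j → ℝ := Function.update s i (pureMix ρi') with hs'def
  have hs'1 : ∀ j, ∑ p, s' j p = 1 := by
    intro j
    by_cases h : j = i
    · subst h
      rw [hs'def, Function.update_self]
      simp [pureMix]
    · rw [hs'def, Function.update_of_ne h]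
      exact hs1 j
  have hs'0 : ∀ (j : N) (p : P j), 0 ≤ s' j p := by
    intro j p
    by_cases h : j = i
    · subst h
      rw [hs'def, Function.update_self]
      unfold pureMix
      split <;> norm_num
    · rw [hs'def, Function.update_of_ne h]
      exact hs0 j p
  have hprod1' : ∀ (σ : ∀ j, P j → ℝ), (∀ j, ∑ p, σ j p = 1) →
      ∑ ρ : ∀ j, P j, ∏ k, σ k (ρ k) = 1 := by
    intro σ hσ
    rw [sum_prod_pi]
    calc ∏ k, ∑ p, σ k p = ∏ k : N, (1:ℝ) := Finset.prod_congr rfl fun k _ => hσ k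
      _ = 1 := Finset.prod_const_one
  have hA : mixedUtil u s' i ≤ mixedUtil (polyUtil Adj U) s' i + δ := by
    refine dist_weighted_le (fun ρ => Finset.prod_nonneg fun k _ => hs'0 k (ρ k))
      (hprod1' s' hs'1) fun ρ => ?_
    exact (abs_le.mp (hclose i ρ)).2
  have hA2 : mixedUtil (polyUtil Adj U) s' i
      = ∑ j ∈ neighbors Adj i, subUtil U i j (pureMix ρi') (s j) := by
    rw [mixed_poly Adj hAdj U s' hs'1 i]
    refine Finset.sum_congr rfl fun j hj => ?_
    have hij : i ≠ j := hneib i j hj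
    rw [hs'def, Function.update_self, Function.update_of_ne (Ne.symm hij)]
  have hB : mixedUtil (polyUtil Adj U) s i ≤ mixedUtil u s i + δ := by
    refine dist_weighted_le (fun ρ => Finset.prod_nonneg fun k _ => hs0 k (ρ k))
      (hprod1' s hs1) fun ρ => ?_
    have h := abs_le.mp (hclose i ρ)
    linarith [h.1]
  have hfinal := hc i ρi'
  rw [hA2] at hA
  linarith [hA, hB, hbound, hfinal]
end
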